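/- arXiv:math/0703013 — 3 statements merged into one kernel-verified Lean document; each statement's English description precedes it below -/
import Mathlib

section
/- Let (λ_i)_{i≥1} be positive reals with λ_{n+1} ≥ 2(λ₁ + … + λ_n) for all n. For disjoint finite subsets I, J of ℕ and n ≥ 0 set λ_n(I) = λ(I ∩ {1,…,n}). Then |λ_n(I) − λ_n(J)| ≤ |λ_{n+1}(I) − λ_{n+1}(J)| for all n, and hence |λ_k(I) − λ_k(J)| ≤ |λ(I) − λ(J)| whenever k ≥ 0 and I ∪ J is finite. -/
/-! Write `g i ∈ {0, λ_i, -λ_i}` for the signed weight of `i` (`+` on `I`, `-` on `J`), so that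
`λ_n(I) - λ_n(J)` is the partial sum `S_n = g_1 + … + g_n`. The growth condition forces
`λ_i ≥ 0`, hence `|S_n| ≤ λ_1 + … + λ_n`. If `g_{n+1} ≠ 0` then
`|S_{n+1}| ≥ λ_{n+1} - |S_n| ≥ 2(λ_1 + … + λ_n) - |S_n| ≥ |S_n|`, so `|S_n|` is monotone in `n`,
and it is eventually `|λ(I) - λ(J)|`. -/

open Finset

section Lacunary

variable {lam : ℕ → ℝ} (hgrow : ∀ n : ℕ, lam (n + 1) ≥ 2 * ∑ i ∈ Icc 1 n, lam i)
include hgrow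

theorem nonneg_of_lacunary {i : ℕ} (hi : 1 ≤ i) : 0 ≤ lam i := by
  obtain ⟨m, rfl⟩ := Nat.exists_eq_add_of_le' hi
  clear hi
  induction m using Nat.strong_induction_on with
  | _ m ih =>
    have hsum : 0 ≤ ∑ i ∈ Icc 1 m, lam i := sum_nonneg fun i hi => by
      obtain ⟨h1, hm⟩ := mem_Icc.mp hi
      obtain ⟨j, rfl⟩ := Nat.exists_eq_add_of_le' h1
      exact ih j (by omega)
    linarith [hgrow m]

variable {g : ℕ → ℝ} (hg : ∀ i, g i = 0 ∨ g i = lam i ∨ g i = -lam i)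
include hg

theorem abs_sum_Icc_le_sum_Icc (n : ℕ) : |∑ i ∈ Icc 1 n, g i| ≤ ∑ i ∈ Icc 1 n, lam i := by
  refine (abs_sum_le_sum_abs _ _).trans (sum_le_sum fun i hi => ?_)
  have hlam := nonneg_of_lacunary hgrow (mem_Icc.mp hi).1
  rcases hg i with h | h | h <;> simp [h, abs_of_nonneg hlam, hlam]

theorem abs_sum_Icc_le_abs_sum_Icc_succ (n : ℕ) :
    |∑ i ∈ Icc 1 n, g i| ≤ |∑ i ∈ Icc 1 (n + 1), g i| := by
  rw [sum_Icc_succ_top (Nat.le_add_left 1 n)]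
  set S := ∑ i ∈ Icc 1 n, g i
  have hS := abs_sum_Icc_le_sum_Icc hgrow hg n
  have hlam := nonneg_of_lacunary hgrow (Nat.le_add_left 1 n)
  have hnext : g (n + 1) = 0 ∨ |g (n + 1)| = lam (n + 1) := by
    rcases hg (n + 1) with h | h | h <;> simp [h, abs_of_nonneg hlam]
  rcases hnext with h | h
  · rw [h, add_zero]
  · calc |S| ≤ |g (n + 1)| - |S| := by linarith [hgrow n]
      _ ≤ |S + g (n + 1)| := by
        simpa [add_comm] using abs_sub_abs_le_abs_add (g (n + 1)) S

theorem monotone_abs_sum_Icc : Monotone fun n => |∑ i ∈ Icc 1 n, g i| :=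
  monotone_nat_of_le_succ (abs_sum_Icc_le_abs_sum_Icc_succ hgrow hg)

end Lacunary

def signedWeight (lam : ℕ → ℝ) (I J : Finset ℕ) (i : ℕ) : ℝ :=
  (if i ∈ I then lam i else 0) - (if i ∈ J then lam i else 0)

theorem signedWeight_trichotomy (lam : ℕ → ℝ) (I J : Finset ℕ) (i : ℕ) :
    signedWeight lam I J i = 0 ∨ signedWeight lam I J i = lam i ∨
      signedWeight lam I J i = -lam i := by
  unfold signedWeight
  split_ifs <;> simp

theorem sum_inter_Icc_sub_sum_inter_Icc (lam : ℕ → ℝ) (I J : Finset ℕ) (n : ℕ) :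
    (∑ i ∈ I ∩ Icc 1 n, lam i) - ∑ j ∈ J ∩ Icc 1 n, lam j =
      ∑ i ∈ Icc 1 n, signedWeight lam I J i := by
  simp only [signedWeight, sum_sub_distrib, sum_ite_mem, inter_comm]

theorem exists_inter_Icc_eq_self (s : Finset ℕ) (hs : ∀ i ∈ s, 1 ≤ i) :
    ∃ N, ∀ n ≥ N, s ∩ Icc 1 n = s :=
  ⟨s.sup id, fun _ hn => inter_eq_left.mpr fun i hi =>
    mem_Icc.mpr ⟨hs i hi, (le_sup (f := id) hi).trans hn⟩⟩

theorem stmt_10_general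
    (lam : ℕ → ℝ)
    (hgrow : ∀ n : ℕ, lam (n + 1) ≥ 2 * ∑ i ∈ Finset.Icc 1 n, lam i)
    (I J : Finset ℕ) (hposIJ : ∀ i ∈ I ∪ J, 1 ≤ i) :
    (∀ n : ℕ,
      |(∑ i ∈ I ∩ Finset.Icc 1 n, lam i) - ∑ j ∈ J ∩ Finset.Icc 1 n, lam j|
        ≤ |(∑ i ∈ I ∩ Finset.Icc 1 (n + 1), lam i) - ∑ j ∈ J ∩ Finset.Icc 1 (n + 1), lam j|) ∧
    (∀ k : ℕ,
      |(∑ i ∈ I ∩ Finset.Icc 1 k, lam i) - ∑ j ∈ J ∩ Finset.Icc 1 k, lam j|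
        ≤ |(∑ i ∈ I, lam i) - ∑ j ∈ J, lam j|) := by
  have hg := signedWeight_trichotomy lam I J
  simp only [sum_inter_Icc_sub_sum_inter_Icc]
  refine ⟨abs_sum_Icc_le_abs_sum_Icc_succ hgrow hg, fun k => ?_⟩
  obtain ⟨NI, hI⟩ := exists_inter_Icc_eq_self I fun i hi => hposIJ i (mem_union_left J hi)
  obtain ⟨NJ, hJ⟩ := exists_inter_Icc_eq_self J fun i hi => hposIJ i (mem_union_right I hi)
  set N := max k (max NI NJ)
  calc |∑ i ∈ Icc 1 k, signedWeight lam I J i|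
      ≤ |∑ i ∈ Icc 1 N, signedWeight lam I J i| :=
        monotone_abs_sum_Icc hgrow hg (le_max_left _ _)
    _ = |(∑ i ∈ I, lam i) - ∑ j ∈ J, lam j| := by
        rw [← sum_inter_Icc_sub_sum_inter_Icc, hI N (by omega), hJ N (by omega)]

/-- With `λ_{n+1} ≥ 2(λ₁ + … + λₙ)` (`λᵢ > 0`), setting
`λₙ(I) = λ(I ∩ {1,…,n})` for disjoint finite sets `I, J` of positive integers, one has
`|λₙ(I) − λₙ(J)| ≤ |λ_{n+1}(I) − λ_{n+1}(J)|` for all `n ≥ 0`, and hence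
`|λ_k(I) − λ_k(J)| ≤ |λ(I) − λ(J)|` for all `k ≥ 0`. -/
theorem stmt_10
    (lam : ℕ → ℝ) (hpos : ∀ i ≥ 1, 0 < lam i)
    (hgrow : ∀ n : ℕ, lam (n + 1) ≥ 2 * ∑ i ∈ Finset.Icc 1 n, lam i)
    (I J : Finset ℕ) (hdisj : Disjoint I J) (hposIJ : ∀ i ∈ I ∪ J, 1 ≤ i) :
    (∀ n : ℕ,
      |(∑ i ∈ I ∩ Finset.Icc 1 n, lam i) - ∑ j ∈ J ∩ Finset.Icc 1 n, lam j|
        ≤ |(∑ i ∈ I ∩ Finset.Icc 1 (n + 1), lam i) - ∑ j ∈ J ∩ Finset.Icc 1 (n + 1), lam j|) ∧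
    (∀ k : ℕ,
      |(∑ i ∈ I ∩ Finset.Icc 1 k, lam i) - ∑ j ∈ J ∩ Finset.Icc 1 k, lam j|
        ≤ |(∑ i ∈ I, lam i) - ∑ j ∈ J, lam j|) :=
  stmt_10_general lam hgrow I J hposIJ
end

section
/- Let x be an element of a Banach space decomposed as an absolutely convergent sum x = Σ_{(I,J)∈S} x(I;J) indexed by pairs of disjoint finite subsets of ℕ, with real coefficients μ(I,J) = λ(I) − λ(J) where λ_n ≥ 2(λ₁+…+λ_{n−1}) + 6ⁿ. Suppose ‖x(I;J)‖ · μ(I,J)² ≤ C for all (I,J) with I ∪ J ≠ ∅. Then Σ_{(I,J): max(I∪J)=n} |μ(I,J)| ‖x(I;J)‖ ≤ (3/6)ⁿ C = 2^{-n} C, and hence Σ_{(I,J)} |μ(I,J)| ‖x(I;J)‖ ≤ C. -/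
open scoped Classical


/-- The index set `S` of pairs `(I, J)` of disjoint finite subsets of the positive
integers. -/
def PairS : Type :=
  {p : Finset ℕ × Finset ℕ // Disjoint p.1 p.2 ∧ ∀ i ∈ p.1 ∪ p.2, 1 ≤ i}

lemma PairS.one_le (p : PairS) : ∀ i ∈ p.1.1 ∪ p.1.2, 1 ≤ i := p.2.2

lemma PairS.disj (p : PairS) : Disjoint p.1.1 p.1.2 := p.2.1

/-- Counting: pairs supported in `Icc 1 n` number at most `3 ^ n`. -/
lemma PairS.card_le_pow (n : ℕ) (s : Finset PairS)
    (hs : ∀ p ∈ s, p.1.1 ∪ p.1.2 ⊆ Finset.Icc 1 n) : s.card ≤ 3 ^ n := by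
  classical
  set F : PairS → (↥(Finset.Icc 1 n) → Fin 3) := fun p i =>
    if (i : ℕ) ∈ p.1.1 then (0 : Fin 3) else if (i : ℕ) ∈ p.1.2 then 1 else 2 with hF
  have hmem1 : ∀ (p : PairS) (i : ↥(Finset.Icc 1 n)), F p i = 0 ↔ (i : ℕ) ∈ p.1.1 := by
    intro p i
    simp only [hF]
    split_ifs with h1 h2
    · simp [h1]
    · simp [h1]
    · simp [h1]
  have hmem2 : ∀ (p : PairS) (i : ↥(Finset.Icc 1 n)), F p i = 1 ↔ (i : ℕ) ∈ p.1.2 := by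
    intro p i
    simp only [hF]
    split_ifs with h1 h2
    · simp [Finset.disjoint_left.1 p.disj h1]
    · simp [h2]
    · simp [h2]
  have hinj : Function.Injective (fun p : s => F p) := by
    intro p q hpq
    have hpq' : ∀ i, F p i = F q i := fun i => congrFun hpq i
    apply Subtype.ext
    apply Subtype.ext
    apply Prod.ext
    · ext i
      constructor
      · intro hi
        have hiIcc : i ∈ Finset.Icc 1 n :=
          hs p p.2 (Finset.mem_union_left _ hi)
        have := (hmem1 (p : PairS) ⟨i, hiIcc⟩).2 hi
        rw [hpq' ⟨i, hiIcc⟩] at this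
        exact (hmem1 (q : PairS) ⟨i, hiIcc⟩).1 this
      · intro hi
        have hiIcc : i ∈ Finset.Icc 1 n :=
          hs q q.2 (Finset.mem_union_left _ hi)
        have := (hmem1 (q : PairS) ⟨i, hiIcc⟩).2 hi
        rw [← hpq' ⟨i, hiIcc⟩] at this
        exact (hmem1 (p : PairS) ⟨i, hiIcc⟩).1 this
    · ext i
      constructor
      · intro hi
        have hiIcc : i ∈ Finset.Icc 1 n :=
          hs p p.2 (Finset.mem_union_right _ hi)
        have := (hmem2 (p : PairS) ⟨i, hiIcc⟩).2 hi
        rw [hpq' ⟨i, hiIcc⟩] at this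
        exact (hmem2 (q : PairS) ⟨i, hiIcc⟩).1 this
      · intro hi
        have hiIcc : i ∈ Finset.Icc 1 n :=
          hs q q.2 (Finset.mem_union_right _ hi)
        have := (hmem2 (q : PairS) ⟨i, hiIcc⟩).2 hi
        rw [← hpq' ⟨i, hiIcc⟩] at this
        exact (hmem2 (p : PairS) ⟨i, hiIcc⟩).1 this
  calc s.card = Fintype.card s := (Fintype.card_coe s).symm
    _ ≤ Fintype.card (↥(Finset.Icc 1 n) → Fin 3) := Fintype.card_le_of_injective _ hinj
    _ = 3 ^ n := by
        rw [Fintype.card_fun, Fintype.card_fin, Fintype.card_coe, Nat.card_Icc]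
        norm_num

/-- The coefficient lower bound `6 ^ max(I ∪ J) ≤ |μ(I, J)|`. -/
lemma PairS.mu_lb (lam : ℕ → ℝ) (hpos : ∀ i ≥ 1, 0 < lam i)
    (hgrow : ∀ n ≥ 1, lam n ≥ 2 * (∑ i ∈ Finset.Icc 1 (n - 1), lam i) + 6 ^ n)
    (p : PairS) (h : (p.1.1 ∪ p.1.2).Nonempty) :
    (6 : ℝ) ^ ((p.1.1 ∪ p.1.2).max' h)
      ≤ |(∑ i ∈ p.1.1, lam i) - ∑ j ∈ p.1.2, lam j| := by
  set n := (p.1.1 ∪ p.1.2).max' h with hn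
  have hmem : n ∈ p.1.1 ∪ p.1.2 := Finset.max'_mem _ h
  have hn1 : 1 ≤ n := p.one_le n hmem
  have hS0 : 0 ≤ ∑ i ∈ Finset.Icc 1 (n - 1), lam i :=
    Finset.sum_nonneg fun i hi => (hpos i (Finset.mem_Icc.1 hi).1).le
  have hkey : lam n - (∑ i ∈ Finset.Icc 1 (n - 1), lam i) ≥ 6 ^ n := by
    have := hgrow n hn1
    linarith
  -- any subset of the union not containing n sums to at most the Icc sum
  have hsub : ∀ K : Finset ℕ, (∀ k ∈ K, k ∈ p.1.1 ∪ p.1.2) → n ∉ K →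
      (∑ k ∈ K, lam k) ≤ ∑ i ∈ Finset.Icc 1 (n - 1), lam i := by
    intro K hK hnK
    apply Finset.sum_le_sum_of_subset_of_nonneg
    · intro k hk
      have h1 : 1 ≤ k := p.one_le k (hK k hk)
      have h2 : k ≤ n := Finset.le_max' _ k (hK k hk)
      have h3 : k ≠ n := fun e => hnK (e ▸ hk)
      exact Finset.mem_Icc.2 ⟨h1, Nat.le_sub_one_of_lt (lt_of_le_of_ne h2 h3)⟩
    · intro i hi _
      exact (hpos i (Finset.mem_Icc.1 hi).1).le
  have hbig : ∀ K : Finset ℕ, (∀ k ∈ K, k ∈ p.1.1 ∪ p.1.2) → n ∈ K →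
      lam n ≤ ∑ k ∈ K, lam k := by
    intro K hK hnK
    exact Finset.single_le_sum (fun i hi => (hpos i (p.one_le i (hK i hi))).le) hnK
  rcases Finset.mem_union.1 hmem with hI | hJ
  · have hnJ : n ∉ p.1.2 := Finset.disjoint_left.1 p.disj hI
    have h1 := hbig p.1.1 (fun k hk => Finset.mem_union_left _ hk) hI
    have h2 := hsub p.1.2 (fun k hk => Finset.mem_union_right _ hk) hnJ
    have : (6 : ℝ) ^ n ≤ (∑ i ∈ p.1.1, lam i) - ∑ j ∈ p.1.2, lam j := by linarith
    exact this.trans (le_abs_self _)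
  · have hnI : n ∉ p.1.1 := Finset.disjoint_right.1 p.disj hJ
    have h1 := hbig p.1.2 (fun k hk => Finset.mem_union_right _ hk) hJ
    have h2 := hsub p.1.1 (fun k hk => Finset.mem_union_left _ hk) hnI
    have : (6 : ℝ) ^ n ≤ -((∑ i ∈ p.1.1, lam i) - ∑ j ∈ p.1.2, lam j) := by linarith
    exact this.trans (neg_le_abs _)

lemma geom_half_sum_le (N : ℕ) :
    (∑ n ∈ Finset.Icc 1 N, ((2 : ℝ)⁻¹) ^ n) ≤ 1 - (2⁻¹ : ℝ) ^ N := by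
  induction N with
  | zero => simp
  | succ N ih =>
      rw [Finset.sum_Icc_succ_top (by omega)]
      have hp : (0 : ℝ) < (2⁻¹ : ℝ) ^ N := by positivity
      have : ((2 : ℝ)⁻¹) ^ (N + 1) = (2⁻¹ : ℝ) ^ N * 2⁻¹ := by ring
      rw [this] at *
      linarith

/-- If `x = Σ_{(I,J)∈S} x(I;J)` is absolutely convergent, the coefficients
`μ(I,J) = λ(I) − λ(J)` come from `λₙ ≥ 2(λ₁+…+λ_{n−1}) + 6ⁿ`, and
`‖x(I;J)‖ μ(I,J)² ≤ C` whenever `I ∪ J ≠ ∅`, then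
`Σ_{max(I∪J)=n} |μ(I,J)| ‖x(I;J)‖ ≤ 2^{-n} C` and `Σ_{(I,J)} |μ(I,J)| ‖x(I;J)‖ ≤ C`. -/
theorem stmt_11
    {E : Type*} [NormedAddCommGroup E] [CompleteSpace E]
    (lam : ℕ → ℝ) (hpos : ∀ i ≥ 1, 0 < lam i)
    (hgrow : ∀ n ≥ 1, lam n ≥ 2 * (∑ i ∈ Finset.Icc 1 (n - 1), lam i) + 6 ^ n)
    (v : PairS → E) (x : E)
    (hx : HasSum v x)  -- absolutely convergent decomposition x = Σ x(I;J)
    (habs : Summable fun p : PairS => ‖v p‖)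
    (μ : PairS → ℝ)
    (hμ : ∀ p : PairS, μ p = (∑ i ∈ p.1.1, lam i) - ∑ j ∈ p.1.2, lam j)
    (C : ℝ)
    (hC : ∀ p : PairS, (p.1.1 ∪ p.1.2).Nonempty → ‖v p‖ * (μ p) ^ 2 ≤ C) :
    (∀ n : ℕ, 1 ≤ n →
      (∑' p : PairS, if h : (p.1.1 ∪ p.1.2).Nonempty then
          (if (p.1.1 ∪ p.1.2).max' h = n then |μ p| * ‖v p‖ else 0) else 0)
        ≤ (2 : ℝ) ^ (-(n : ℤ)) * C) ∧
    (∑' p : PairS, |μ p| * ‖v p‖) ≤ C := by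
  classical
  set g : PairS → ℝ := fun p => |μ p| * ‖v p‖ with hg
  have hg0 : ∀ p, 0 ≤ g p := fun p => mul_nonneg (abs_nonneg _) (norm_nonneg _)
  -- C is nonnegative
  have hC0 : 0 ≤ C := by
    have hp0 : Disjoint ({1} : Finset ℕ) (∅ : Finset ℕ) ∧
        ∀ i ∈ ({1} : Finset ℕ) ∪ ∅, 1 ≤ i := by simp
    set p0 : PairS := ⟨(({1} : Finset ℕ), (∅ : Finset ℕ)), hp0⟩ with hp0def
    have h1 : (p0.1.1 ∪ p0.1.2).Nonempty := by
      refine ⟨1, ?_⟩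
      simp [hp0def]
    have := hC p0 h1
    have h2 : 0 ≤ ‖v p0‖ * (μ p0) ^ 2 := by positivity
    linarith
  -- pointwise bound
  have key : ∀ (p : PairS) (h : (p.1.1 ∪ p.1.2).Nonempty),
      g p ≤ C / 6 ^ ((p.1.1 ∪ p.1.2).max' h) := by
    intro p h
    set n := (p.1.1 ∪ p.1.2).max' h with hn
    have h6 : (6 : ℝ) ^ n ≤ |μ p| := by
      rw [hμ p]
      exact PairS.mu_lb lam hpos hgrow p h
    have h6pos : (0 : ℝ) < 6 ^ n := by positivity
    have hc := hC p h
    have habs2 : ‖v p‖ * (μ p) ^ 2 = g p * |μ p| := by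
      rw [hg]
      rw [← sq_abs]
      ring
    rw [habs2] at hc
    rw [le_div_iff₀ h6pos]
    calc g p * 6 ^ n ≤ g p * |μ p| :=
          mul_le_mul_of_nonneg_left h6 (hg0 p)
      _ ≤ C := hc
  -- the per-level summand
  set F : ℕ → PairS → ℝ := fun n p =>
    if h : (p.1.1 ∪ p.1.2).Nonempty then
      (if (p.1.1 ∪ p.1.2).max' h = n then |μ p| * ‖v p‖ else 0) else 0 with hFdef
  have hF0 : ∀ n p, 0 ≤ F n p := by
    intro n p
    simp only [hFdef]
    split_ifs <;> positivity
  -- bound the finite sums at each level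
  have level : ∀ n : ℕ, 1 ≤ n → ∀ s : Finset PairS,
      (∑ p ∈ s, F n p) ≤ (2 : ℝ) ^ (-(n : ℤ)) * C := by
    intro n hn s
    set P : PairS → Prop := fun p =>
      ∃ h : (p.1.1 ∪ p.1.2).Nonempty, (p.1.1 ∪ p.1.2).max' h = n with hP
    have hsum : (∑ p ∈ s.filter P, F n p) = ∑ p ∈ s, F n p := by
      apply Finset.sum_filter_of_ne
      intro p _ hne
      simp only [hFdef, hP] at hne ⊢
      by_cases h : (p.1.1 ∪ p.1.2).Nonempty
      · refine ⟨h, ?_⟩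
        by_contra hmax
        rw [dif_pos h, if_neg hmax] at hne
        exact hne rfl
      · rw [dif_neg h] at hne; exact absurd rfl hne
    have hcard : (s.filter P).card ≤ 3 ^ n := by
      apply PairS.card_le_pow
      intro p hp
      obtain ⟨hne, hmax⟩ := (Finset.mem_filter.1 hp).2
      intro i hi
      exact Finset.mem_Icc.2 ⟨p.one_le i hi, hmax ▸ Finset.le_max' _ i hi⟩
    have hbound : ∀ p ∈ s.filter P, F n p ≤ C / 6 ^ n := by
      intro p hp
      obtain ⟨hne, hmax⟩ := (Finset.mem_filter.1 hp).2
      simp only [hFdef]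
      rw [dif_pos hne, if_pos hmax]
      have := key p hne
      rw [hmax] at this
      exact this
    calc (∑ p ∈ s, F n p) = ∑ p ∈ s.filter P, F n p := hsum.symm
      _ ≤ (s.filter P).card • (C / 6 ^ n) :=
          Finset.sum_le_card_nsmul _ _ _ hbound
      _ = ((s.filter P).card : ℝ) * (C / 6 ^ n) := by
          rw [nsmul_eq_mul]
      _ ≤ (3 : ℝ) ^ n * (C / 6 ^ n) := by
          apply mul_le_mul_of_nonneg_right _ (by positivity)
          calc ((s.filter P).card : ℝ) ≤ ((3 ^ n : ℕ) : ℝ) := by exact_mod_cast hcard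
            _ = (3 : ℝ) ^ n := by push_cast; ring
      _ = (2 : ℝ) ^ (-(n : ℤ)) * C := by
          rw [zpow_neg, zpow_natCast]
          have h6 : (6 : ℝ) ^ n = 2 ^ n * 3 ^ n := by
            rw [← mul_pow]; norm_num
          rw [h6]
          have h2 : ((2 : ℝ) ^ n) ≠ 0 := by positivity
          have h3 : ((3 : ℝ) ^ n) ≠ 0 := by positivity
          field_simp
  constructor
  · intro n hn
    exact tsum_le_of_sum_le' (by positivity) (level n hn)
  · apply tsum_le_of_sum_le' hC0
    intro s
    set m : PairS → ℕ := fun p =>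
      if h : (p.1.1 ∪ p.1.2).Nonempty then (p.1.1 ∪ p.1.2).max' h else 0 with hm
    set N : ℕ := s.sup m with hN
    have pointwise : ∀ p ∈ s, g p ≤ ∑ n ∈ Finset.Icc 1 N, F n p := by
      intro p hp
      by_cases h : (p.1.1 ∪ p.1.2).Nonempty
      · set k := (p.1.1 ∪ p.1.2).max' h with hk
        have hk1 : 1 ≤ k := p.one_le k (Finset.max'_mem _ h)
        have hkN : k ≤ N := by
          have h2 : m p ≤ N := Finset.le_sup hp
          simp only [hm] at h2
          rwa [dif_pos h] at h2
        have hmem : k ∈ Finset.Icc 1 N := Finset.mem_Icc.2 ⟨hk1, hkN⟩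
        have : g p = F k p := by
          simp only [hFdef]
          rw [dif_pos h]
          simp [hg, hk]
        rw [this]
        exact Finset.single_le_sum (fun n _ => hF0 n p) hmem
      · have hEmpty : p.1.1 ∪ p.1.2 = ∅ := Finset.not_nonempty_iff_eq_empty.1 h
        obtain ⟨h1, h2⟩ := Finset.union_eq_empty.1 hEmpty
        have : μ p = 0 := by rw [hμ p, h1, h2]; simp
        have hgp : g p = 0 := by rw [hg]; simp [this]
        rw [hgp]
        exact Finset.sum_nonneg fun n _ => hF0 n p
    calc (∑ p ∈ s, g p) ≤ ∑ p ∈ s, ∑ n ∈ Finset.Icc 1 N, F n p :=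
          Finset.sum_le_sum pointwise
      _ = ∑ n ∈ Finset.Icc 1 N, ∑ p ∈ s, F n p := Finset.sum_comm
      _ ≤ ∑ n ∈ Finset.Icc 1 N, (2 : ℝ) ^ (-(n : ℤ)) * C := by
          apply Finset.sum_le_sum
          intro n hn
          exact level n (Finset.mem_Icc.1 hn).1 s
      _ = (∑ n ∈ Finset.Icc 1 N, ((2 : ℝ)⁻¹) ^ n) * C := by
          rw [Finset.sum_mul]
          congr 1
          ext n
          rw [zpow_neg, zpow_natCast, inv_pow]
      _ ≤ 1 * C := by
          apply mul_le_mul_of_nonneg_right _ hC0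
          have := geom_half_sum_le N
          have hp : (0 : ℝ) ≤ (2⁻¹ : ℝ) ^ N := by positivity
          linarith
      _ = C := one_mul C
end

section
/- Let δ be the generator of a strongly continuous group of isometries on a Banach space A, and suppose x ∈ D(δ²) admits an absolutely convergent expansion δ(x) = i Σ_{(I,J)} μ(I,J) x(I;J) with δ²(x) = −Σ_{(I,J)} μ(I,J)² x(I;J), where the μ(I,J) = λ(I) − λ(J) satisfy |μ(I,J)| ≥ 6ⁿ when max(I∪J) = n and λ_n ≥ 2(λ₁+…+λ_{n−1}) + 6ⁿ. Then ‖δ(x)‖ ≤ ‖δ²(x)‖. -/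
open Filter Topology

/-- If `δ` generates a strongly continuous group of isometries and
`x ∈ D(δ²)` has absolutely convergent expansions
`δ(x) = i Σ μ(I,J) x(I;J)` and `δ²(x) = −Σ μ(I,J)² x(I;J)` with `μ(I,J) = λ(I) − λ(J)`,
`|μ(I,J)| ≥ 6ⁿ` when `max(I∪J) = n`, and `λₙ ≥ 2(λ₁+…+λ_{n−1}) + 6ⁿ`, then
`‖δ(x)‖ ≤ ‖δ²(x)‖`. -/
theorem stmt_14
    {A : Type*} [NormedAddCommGroup A] [NormedSpace ℂ A] [CompleteSpace A]
    -- U is a strongly continuous group of isometries with generator δ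
    (U : ℝ → A →L[ℂ] A)
    (hU_iso : ∀ t : ℝ, ∀ y : A, ‖U t y‖ = ‖y‖)
    (hU_grp : ∀ s t : ℝ, ∀ y : A, U (s + t) y = U s (U t y))
    (δ : A →ₗ.[ℂ] A)
    (hδ_gen : ∀ y : δ.domain, Tendsto (fun t : ℝ => (t⁻¹ : ℂ) • (U t y - (y : A)))
      (𝓝[≠] (0:ℝ)) (𝓝 (δ y)))
    -- x ∈ D(δ²)
    (x : δ.domain) (hx2 : δ x ∈ δ.domain)
    -- the coefficients μ(I,J) = λ(I) − λ(J)
    (lam : ℕ → ℝ) (hpos : ∀ i ≥ 1, 0 < lam i)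
    (hgrow : ∀ n ≥ 1, lam n ≥ 2 * (∑ i ∈ Finset.Icc 1 (n - 1), lam i) + 6 ^ n)
    (μ : PairS → ℝ)
    (hμ : ∀ p : PairS, μ p = (∑ i ∈ p.1.1, lam i) - ∑ j ∈ p.1.2, lam j)
    (hμ_lower : ∀ p : PairS, ∀ h : (p.1.1 ∪ p.1.2).Nonempty,
      |μ p| ≥ 6 ^ ((p.1.1 ∪ p.1.2).max' h))
    -- the absolutely convergent expansions of δ(x) and δ²(x)
    (v : PairS → A)
    (habs : Summable fun p : PairS => |μ p| * ‖v p‖)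
    (z : A) (hz : HasSum (fun p : PairS => ((μ p : ℝ) : ℂ) • v p) z)
    (hδx : δ x = Complex.I • z)
    (hδ2x : HasSum (fun p : PairS => ((-(μ p ^ 2) : ℝ) : ℂ) • v p) (δ ⟨δ x, hx2⟩))
    (hbound : ∀ p : PairS, ‖((μ p ^ 2 : ℝ) : ℂ) • v p‖ ≤ ‖δ ⟨δ x, hx2⟩‖) :
    ‖δ x‖ ≤ ‖δ ⟨δ x, hx2⟩‖ := by
  classical
  set M := ‖δ ⟨δ x, hx2⟩‖ with hM
  have hM0 : 0 ≤ M := norm_nonneg _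
  set f : PairS → ℝ := fun p => |μ p| * ‖v p‖ with hfdef
  have hf0 : ∀ p, 0 ≤ f p := fun p => mul_nonneg (abs_nonneg _) (norm_nonneg _)
  -- ‖δ x‖ = ‖z‖
  have h1 : ‖δ x‖ = ‖z‖ := by
    rw [hδx, norm_smul, Complex.norm_I, one_mul]
  have hnorm : ∀ p, ‖((μ p : ℝ) : ℂ) • v p‖ = f p := by
    intro p
    rw [norm_smul, Complex.norm_real, Real.norm_eq_abs]
  have habs' : Summable fun p => ‖((μ p : ℝ) : ℂ) • v p‖ := by
    simpa only [hnorm] using habs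
  have h2 : ‖z‖ ≤ ∑' p, f p := by
    have h := norm_tsum_le_tsum_norm habs'
    rw [hz.tsum_eq] at h
    calc ‖z‖ ≤ ∑' p, ‖((μ p : ℝ) : ℂ) • v p‖ := h
      _ = ∑' p, f p := tsum_congr hnorm
  -- the "level" function
  set π : PairS → ℕ := fun p =>
    if h : (p.1.1 ∪ p.1.2).Nonempty then (p.1.1 ∪ p.1.2).max' h else 0 with hπdef
  have hπ_mem : ∀ (p : PairS), ∀ i ∈ p.1.1 ∪ p.1.2, 1 ≤ i ∧ i ≤ π p := by
    intro p i hi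
    have hne : (p.1.1 ∪ p.1.2).Nonempty := ⟨i, hi⟩
    refine ⟨p.2.2 i hi, ?_⟩
    simp only [hπdef, dif_pos hne]
    exact Finset.le_max' _ i hi
  -- level 0 means the empty pair, where μ vanishes
  have hzero : ∀ p, π p = 0 → f p = 0 := by
    intro p hp
    have hemp : ¬(p.1.1 ∪ p.1.2).Nonempty := by
      intro hne
      obtain ⟨i, hi⟩ := hne
      have := hπ_mem p i hi
      omega
    have h1 : p.1.1 = ∅ := by
      rw [Finset.not_nonempty_iff_eq_empty, Finset.union_eq_empty] at hemp
      exact hemp.1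
    have h2 : p.1.2 = ∅ := by
      rw [Finset.not_nonempty_iff_eq_empty, Finset.union_eq_empty] at hemp
      exact hemp.2
    have : μ p = 0 := by rw [hμ p, h1, h2]; simp
    simp [hfdef, this]
  -- pointwise bound at positive levels
  have hbnd : ∀ p, 1 ≤ π p → f p ≤ M / 6 ^ (π p) := by
    intro p hp
    have hne : (p.1.1 ∪ p.1.2).Nonempty := by
      by_contra hne
      simp only [hπdef, dif_neg hne] at hp
      omega
    have hμp : |μ p| ≥ 6 ^ (π p) := by
      have := hμ_lower p hne
      simpa only [hπdef, dif_pos hne] using this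
    have h6 : (0:ℝ) < 6 ^ (π p) := by positivity
    rw [le_div_iff₀ h6]
    have hsq : μ p ^ 2 * ‖v p‖ ≤ M := by
      have := hbound p
      rwa [norm_smul, Complex.norm_real, Real.norm_eq_abs, abs_of_nonneg (sq_nonneg _)] at this
    calc f p * 6 ^ (π p) ≤ f p * |μ p| := by
          apply mul_le_mul_of_nonneg_left hμp (hf0 p)
      _ = μ p ^ 2 * ‖v p‖ := by
          simp only [hfdef]
          rw [mul_comm (|μ p|) (‖v p‖), mul_assoc, ← sq_abs, sq]
          ring
      _ ≤ M := hsq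
  -- cardinality of each level inside a finite set
  have hcard : ∀ (s : Finset PairS) (n : ℕ),
      (s.filter (fun p => π p = n)).card ≤ 3 ^ n := by
    intro s n
    have : (s.filter (fun p => π p = n)).card ≤
        (Finset.univ : Finset (Fin n → Fin 3)).card := by
      apply Finset.card_le_card_of_injOn
        (fun p => fun i : Fin n =>
          if (i : ℕ) + 1 ∈ p.1.1 then 0 else if (i : ℕ) + 1 ∈ p.1.2 then 1 else 2)
      · intro a _; exact Finset.mem_univ _
      · intro p hp q hq hfq
        simp only [Finset.coe_filter, Set.mem_setOf_eq] at hp hq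
        have key : ∀ (r : PairS), π r = n → ∀ i, i ∈ r.1.1 ∪ r.1.2 →
            ∃ j : Fin n, (j : ℕ) + 1 = i := by
          intro r hr i hi
          obtain ⟨h1i, h2i⟩ := hπ_mem r i hi
          rw [hr] at h2i
          exact ⟨⟨i - 1, by omega⟩, by show i - 1 + 1 = i; omega⟩
        have hmem1 : ∀ i, i ∈ p.1.1 ↔ i ∈ q.1.1 := by
          intro i
          constructor
          · intro hi
            obtain ⟨j, hj⟩ := key p hp.2 i (Finset.mem_union_left _ hi)
            have h0 : (if (j : ℕ) + 1 ∈ p.1.1 then (0 : Fin 3)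
                else if (j : ℕ) + 1 ∈ p.1.2 then 1 else 2) = 0 := by
              rw [if_pos (hj ▸ hi)]
            have h0' : (if (j : ℕ) + 1 ∈ p.1.1 then (0 : Fin 3)
                else if (j : ℕ) + 1 ∈ p.1.2 then 1 else 2) =
                (if (j : ℕ) + 1 ∈ q.1.1 then (0 : Fin 3)
                else if (j : ℕ) + 1 ∈ q.1.2 then 1 else 2) := congrFun hfq j
            rw [h0] at h0'
            by_contra hq1
            rw [hj] at h0'
            by_cases hq2 : i ∈ q.1.2
            · rw [if_neg hq1, if_pos hq2] at h0'; exact absurd h0'.symm (by decide)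
            · rw [if_neg hq1, if_neg hq2] at h0'; exact absurd h0'.symm (by decide)
          · intro hi
            obtain ⟨j, hj⟩ := key q hq.2 i (Finset.mem_union_left _ hi)
            have h0 : (if (j : ℕ) + 1 ∈ q.1.1 then (0 : Fin 3)
                else if (j : ℕ) + 1 ∈ q.1.2 then 1 else 2) = 0 := by
              rw [if_pos (hj ▸ hi)]
            have h0' : (if (j : ℕ) + 1 ∈ p.1.1 then (0 : Fin 3)
                else if (j : ℕ) + 1 ∈ p.1.2 then 1 else 2) =
                (if (j : ℕ) + 1 ∈ q.1.1 then (0 : Fin 3)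
                else if (j : ℕ) + 1 ∈ q.1.2 then 1 else 2) := congrFun hfq j
            rw [h0] at h0'
            by_contra hp1
            rw [hj] at h0'
            by_cases hp2 : i ∈ p.1.2
            · rw [if_neg hp1, if_pos hp2] at h0'; exact absurd h0' (by decide)
            · rw [if_neg hp1, if_neg hp2] at h0'; exact absurd h0' (by decide)
        have hmem2 : ∀ i, i ∈ p.1.2 ↔ i ∈ q.1.2 := by
          intro i
          constructor
          · intro hi
            obtain ⟨j, hj⟩ := key p hp.2 i (Finset.mem_union_right _ hi)
            have hp1 : (j : ℕ) + 1 ∉ p.1.1 := by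
              rw [hj]
              exact Finset.disjoint_right.mp p.2.1 hi
            have h0 : (if (j : ℕ) + 1 ∈ p.1.1 then (0 : Fin 3)
                else if (j : ℕ) + 1 ∈ p.1.2 then 1 else 2) = 1 := by
              rw [if_neg hp1, if_pos (hj ▸ hi)]
            have h0' : (if (j : ℕ) + 1 ∈ p.1.1 then (0 : Fin 3)
                else if (j : ℕ) + 1 ∈ p.1.2 then 1 else 2) =
                (if (j : ℕ) + 1 ∈ q.1.1 then (0 : Fin 3)
                else if (j : ℕ) + 1 ∈ q.1.2 then 1 else 2) := congrFun hfq j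
            rw [h0] at h0'
            by_contra hq2
            rw [hj] at h0'
            by_cases hq1 : i ∈ q.1.1
            · rw [if_pos hq1] at h0'; exact absurd h0'.symm (by decide)
            · rw [if_neg hq1, if_neg hq2] at h0'; exact absurd h0'.symm (by decide)
          · intro hi
            obtain ⟨j, hj⟩ := key q hq.2 i (Finset.mem_union_right _ hi)
            have hq1 : (j : ℕ) + 1 ∉ q.1.1 := by
              rw [hj]
              exact Finset.disjoint_right.mp q.2.1 hi
            have h0 : (if (j : ℕ) + 1 ∈ q.1.1 then (0 : Fin 3)
                else if (j : ℕ) + 1 ∈ q.1.2 then 1 else 2) = 1 := by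
              rw [if_neg hq1, if_pos (hj ▸ hi)]
            have h0' : (if (j : ℕ) + 1 ∈ p.1.1 then (0 : Fin 3)
                else if (j : ℕ) + 1 ∈ p.1.2 then 1 else 2) =
                (if (j : ℕ) + 1 ∈ q.1.1 then (0 : Fin 3)
                else if (j : ℕ) + 1 ∈ q.1.2 then 1 else 2) := congrFun hfq j
            rw [h0] at h0'
            by_contra hp2
            rw [hj] at h0'
            by_cases hp1 : i ∈ p.1.1
            · rw [if_pos hp1] at h0'; exact absurd h0' (by decide)
            · rw [if_neg hp1, if_neg hp2] at h0'; exact absurd h0' (by decide)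
        apply Subtype.ext
        apply Prod.ext
        · exact Finset.ext hmem1
        · exact Finset.ext hmem2
    calc (s.filter (fun p => π p = n)).card
        ≤ (Finset.univ : Finset (Fin n → Fin 3)).card := this
      _ = 3 ^ n := by rw [Finset.card_univ, Fintype.card_fun]; simp
  -- the level-wise bound
  set b : ℕ → ℝ := fun n => if n = 0 then 0 else M * (1/2) ^ n with hbdef
  have hb0 : ∀ n, 0 ≤ b n := by
    intro n
    simp only [hbdef]
    split
    · exact le_refl 0
    · exact mul_nonneg hM0 (by positivity)
  have hb_le : ∀ n, b n ≤ M * (1/2) ^ n := by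
    intro n
    simp only [hbdef]
    split
    · exact mul_nonneg hM0 (by positivity)
    · exact le_refl _
  have hb_sum : Summable b := by
    apply Summable.of_nonneg_of_le hb0 hb_le
    exact (summable_geometric_of_lt_one (by norm_num) (by norm_num)).mul_left M
  have hb_tsum : ∑' n, b n = M := by
    rw [Summable.tsum_eq_zero_add hb_sum]
    have : ∀ n : ℕ, b (n + 1) = (M * (1/2)) * (1/2) ^ n := by
      intro n
      simp only [hbdef, Nat.succ_ne_zero, if_false, pow_succ]
      ring
    rw [tsum_congr this, tsum_mul_left,
      tsum_geometric_of_lt_one (by norm_num) (by norm_num)]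
    simp only [hbdef, if_pos rfl]
    ring
  -- every partial sum is bounded by M
  have key : ∀ s : Finset PairS, ∑ p ∈ s, f p ≤ M := by
    intro s
    rw [← Finset.sum_fiberwise_of_maps_to (g := π) (t := s.image π)
      (fun p hp => Finset.mem_image_of_mem π hp) f]
    calc ∑ n ∈ s.image π, ∑ p ∈ s.filter (fun p => π p = n), f p
        ≤ ∑ n ∈ s.image π, b n := by
          apply Finset.sum_le_sum
          intro n _
          rcases Nat.eq_zero_or_pos n with hn | hn
          · subst hn
            have : ∑ p ∈ s.filter (fun p => π p = 0), f p = 0 := by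
              apply Finset.sum_eq_zero
              intro p hp
              exact hzero p (Finset.mem_filter.mp hp).2
            rw [this]
            exact hb0 0
          · have hbn : b n = M * (1/2) ^ n := by
              simp only [hbdef, if_neg (Nat.pos_iff_ne_zero.mp hn)]
            calc ∑ p ∈ s.filter (fun p => π p = n), f p
                ≤ (s.filter (fun p => π p = n)).card • (M / 6 ^ n) := by
                  apply Finset.sum_le_card_nsmul
                  intro p hp
                  have hpn := (Finset.mem_filter.mp hp).2
                  have := hbnd p (hpn ▸ hn)
                  rwa [hpn] at this
              _ = ((s.filter (fun p => π p = n)).card : ℝ) * (M / 6 ^ n) := by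
                  rw [nsmul_eq_mul]
              _ ≤ (3 ^ n : ℝ) * (M / 6 ^ n) := by
                  apply mul_le_mul_of_nonneg_right _ (by positivity)
                  exact_mod_cast hcard s n
              _ = b n := by
                  rw [hbn]
                  rw [div_eq_mul_inv]
                  have h6 : (6 : ℝ) ^ n = 2 ^ n * 3 ^ n := by
                    rw [← mul_pow]; norm_num
                  rw [h6]
                  field_simp
                  rw [mul_assoc, ← mul_pow]; norm_num
      _ ≤ ∑' n, b n := Summable.sum_le_tsum _ (fun n _ => hb0 n) hb_sum
      _ = M := hb_tsum
  have h3 : ∑' p, f p ≤ M := Summable.tsum_le_of_sum_le habs key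
  rw [h1]
  linarith
end
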